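/- arXiv:2506.08435 — 2 statements merged into one kernel-verified Lean document; each statement's English description precedes it below -/
import Mathlib

section
/- Let E be a real inner product space, x* ∈ E, and let μ, L, η be real numbers with μ > 0, L > 0, μ² ≤ L, and 0 < η < 2μ/L. Let x : ℕ → E and g : ℕ → E be sequences with x_{j+1} = x_j − η • g_j for all j, and suppose that for every j we have ⟨x_j − x*, g_j⟩ ≥ μ · ‖x* − x_j‖² and ‖g_j‖² ≤ L · ‖x* − x_j‖². Set ρ = 1 + η²·L − 2·η·μ. Then 0 ≤ ρ < 1, for every j it holds that ‖x* − x_j‖² ≤ ρ^j · ‖x* − x_0‖², and consequently the sequence x_j converges to x*. -/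
open scoped RealInnerProductSpace

/-- Linear convergence of gradient-descent-style iterates under the (non-strict)
convergence conditions of Equation (5) with step size in the safe range
`0 < η < 2μ/L`: the contraction factor `ρ = 1 + η²L − 2ημ` satisfies `0 ≤ ρ < 1`,
the squared distances decay geometrically, and the iterates converge to `x*`. -/
theorem gradient_descent_converges {E : Type*} [NormedAddCommGroup E]
    [InnerProductSpace ℝ E] (xstar : E) (μ L η : ℝ)
    (hμ : 0 < μ) (hL : 0 < L) (hμL : μ ^ 2 ≤ L)
    (hη0 : 0 < η) (hη : η < 2 * μ / L)
    (x g : ℕ → E) (hupd : ∀ j, x (j + 1) = x j - η • g j)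
    (h1 : ∀ j, μ * ‖xstar - x j‖ ^ 2 ≤ ⟪x j - xstar, g j⟫)
    (h2 : ∀ j, ‖g j‖ ^ 2 ≤ L * ‖xstar - x j‖ ^ 2) :
    0 ≤ 1 + η ^ 2 * L - 2 * η * μ ∧ 1 + η ^ 2 * L - 2 * η * μ < 1 ∧
    (∀ j, ‖xstar - x j‖ ^ 2 ≤ (1 + η ^ 2 * L - 2 * η * μ) ^ j * ‖xstar - x 0‖ ^ 2) ∧
    Filter.Tendsto x Filter.atTop (nhds xstar) := by
  set ρ : ℝ := 1 + η ^ 2 * L - 2 * η * μ with hρ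
  have hρ0 : 0 ≤ ρ := by nlinarith [sq_nonneg (1 - η * μ), sq_nonneg η]
  have hρ1 : ρ < 1 := by
    have : η * L < 2 * μ := (lt_div_iff₀ hL).mp hη
    nlinarith
  have key : ∀ j, ‖xstar - x (j + 1)‖ ^ 2 ≤ ρ * ‖xstar - x j‖ ^ 2 := by
    intro j
    have hx : xstar - x (j + 1) = (xstar - x j) + η • g j := by
      rw [hupd j]; abel
    have hexp : ‖(xstar - x j) + η • g j‖ ^ 2
        = ‖xstar - x j‖ ^ 2 + 2 * (η * ⟪xstar - x j, g j⟫) + η ^ 2 * ‖g j‖ ^ 2 := by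
      rw [@norm_add_sq_real]
      rw [real_inner_smul_right, norm_smul]
      simp [mul_pow, abs_of_nonneg hη0.le]
      try ring
    have hinner : ⟪xstar - x j, g j⟫ = - ⟪x j - xstar, g j⟫ := by
      rw [← inner_neg_left]; congr 1; abel
    have h1j := h1 j
    have h2j := h2 j
    rw [hx, hexp, hinner]
    nlinarith [sq_nonneg η]
  have geo : ∀ j, ‖xstar - x j‖ ^ 2 ≤ ρ ^ j * ‖xstar - x 0‖ ^ 2 := by
    intro j
    induction j with
    | zero => simp
    | succ n ih =>
      calc ‖xstar - x (n + 1)‖ ^ 2 ≤ ρ * ‖xstar - x n‖ ^ 2 := key n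
        _ ≤ ρ * (ρ ^ n * ‖xstar - x 0‖ ^ 2) := by
            exact mul_le_mul_of_nonneg_left ih hρ0
        _ = ρ ^ (n + 1) * ‖xstar - x 0‖ ^ 2 := by ring
  refine ⟨hρ0, hρ1, geo, ?_⟩
  have hnorm : Filter.Tendsto (fun j => ‖xstar - x j‖ ^ 2) Filter.atTop (nhds 0) := by
    have hg : Filter.Tendsto (fun j : ℕ => ρ ^ j * ‖xstar - x 0‖ ^ 2) Filter.atTop (nhds 0) := by
      have := tendsto_pow_atTop_nhds_zero_of_lt_one hρ0 hρ1
      simpa using this.mul_const (‖xstar - x 0‖ ^ 2)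
    exact squeeze_zero (fun j => by positivity) geo hg
  have hnorm' : Filter.Tendsto (fun j => ‖xstar - x j‖) Filter.atTop (nhds 0) := by
    have := hnorm.sqrt
    simpa [Real.sqrt_sq (norm_nonneg _)] using this
  rw [tendsto_iff_norm_sub_tendsto_zero]
  simpa [norm_sub_rev] using hnorm'
end

section
/- Let m, n : ℕ, let f : EuclideanSpace ℝ (Fin m) → ℝ be differentiable, let W : Matrix (Fin m) (Fin n) ℝ and b ∈ EuclideanSpace ℝ (Fin m), and let x, x' ∈ EuclideanSpace ℝ (Fin n). Suppose: (i) ∇f(W.mulVec x + b) = ∇f(W.mulVec x' + b) (the gradients with respect to the bias coincide); (ii) this common gradient vector is nonzero; and (iii) vecMulVec (∇f(W.mulVec x + b)) x = vecMulVec (∇f(W.mulVec x' + b)) x' (the gradients with respect to the weight matrix of the fully connected layer coincide). Then x = x'. Equivalently, for any x ≠ x' at which hypothesis (ii) holds, the gradients of the loss with respect to the layer parameters at inputs x and x' cannot all coincide. -/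
theorem Matrix.vecMulVec_right_injective {α m n : Type*} [Mul α] [Zero α]
    [IsLeftCancelMulZero α] {a : m → α} (ha : a ≠ 0) :
    Function.Injective (Matrix.vecMulVec a : (n → α) → Matrix m n α) := by
  intro v w hvw
  obtain ⟨i, hi⟩ := Function.ne_iff.mp ha
  funext j
  exact mul_left_cancel₀ hi (congrFun (congrFun hvw i) j)

theorem fc_layer_gradients_determine_input_general (m n : ℕ)
    (f : EuclideanSpace ℝ (Fin m) → ℝ)
    (W : Matrix (Fin m) (Fin n) ℝ) (b : EuclideanSpace ℝ (Fin m))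
    (x x' : EuclideanSpace ℝ (Fin n))
    (h1 : gradient f ((WithLp.equiv 2 _).symm (W.mulVec x) + b) =
          gradient f ((WithLp.equiv 2 _).symm (W.mulVec x') + b))
    (h2 : gradient f ((WithLp.equiv 2 _).symm (W.mulVec x) + b) ≠ 0)
    (h3 : Matrix.vecMulVec
            (WithLp.equiv 2 _ (gradient f ((WithLp.equiv 2 _).symm (W.mulVec x) + b)))
            (WithLp.equiv 2 _ x) =
          Matrix.vecMulVec
            (WithLp.equiv 2 _ (gradient f ((WithLp.equiv 2 _).symm (W.mulVec x') + b)))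
            (WithLp.equiv 2 _ x')) :
    x = x' := by
  rw [← h1] at h3
  exact (WithLp.equiv 2 _).injective (Matrix.vecMulVec_right_injective (by simpa using h2) h3)

/-- Core of Theorem 1: for a fully connected layer `y = Wx + b` with differentiable
scalar loss `f`, if the gradients of the loss w.r.t. the bias coincide at inputs
`x` and `x'`, this common gradient is nonzero, and the gradients w.r.t. the weight
matrix (the outer products `vecMulVec ∇f(Wx+b) x`) also coincide, then `x = x'`. -/
theorem fc_layer_gradients_determine_input (m n : ℕ)
    (f : EuclideanSpace ℝ (Fin m) → ℝ) (hf : Differentiable ℝ f)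
    (W : Matrix (Fin m) (Fin n) ℝ) (b : EuclideanSpace ℝ (Fin m))
    (x x' : EuclideanSpace ℝ (Fin n))
    (h1 : gradient f ((WithLp.equiv 2 _).symm (W.mulVec x) + b) =
          gradient f ((WithLp.equiv 2 _).symm (W.mulVec x') + b))
    (h2 : gradient f ((WithLp.equiv 2 _).symm (W.mulVec x) + b) ≠ 0)
    (h3 : Matrix.vecMulVec
            (WithLp.equiv 2 _ (gradient f ((WithLp.equiv 2 _).symm (W.mulVec x) + b)))
            (WithLp.equiv 2 _ x) =
          Matrix.vecMulVec
            (WithLp.equiv 2 _ (gradient f ((WithLp.equiv 2 _).symm (W.mulVec x') + b)))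
            (WithLp.equiv 2 _ x')) :
    x = x' :=
  fc_layer_gradients_determine_input_general m n f W b x x' h1 h2 h3
end
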